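/- arXiv:2012.05156 — 6 statements merged into one kernel-verified Lean document; each statement's English description precedes it below -/
import Mathlib

section
/- Consider gradient flow ẇ(t) = -∇L(w(t)) on the single-neuron square loss L(w) = ½ Σᵢ (σ(⟨xᵢ, w⟩) - yᵢ)² with σ monotonically non-decreasing. If w(∞) := lim_{t→∞} w(t) exists and L(w(∞)) = 0, and w* is any minimizer of ‖w - w(0)‖ subject to L(w) = 0, then ‖w(∞) - w(0)‖ ≤ 2‖w* - w(0)‖. -/
/-!
Every zero-loss point `w*` interpolates the data, `σ ⟪xᵢ, w*⟫ = yᵢ`, so by monotonicity of `σ`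
each summand of `⟪∇L(w), w - w*⟫` is a nonnegative multiple of `(σ a - σ b) (a - b) ≥ 0`.
Hence `‖w(t) - w*‖` is non-increasing along the flow, so `‖w(∞) - w*‖ ≤ ‖w(0) - w*‖`, and the
triangle inequality through `w*` gives the factor `2`.
-/

open Filter Set

section Flow

variable {E : Type*} [NormedAddCommGroup E] [InnerProductSpace ℝ E]

lemma antitoneOn_norm_sub_of_inner_deriv_nonpos {w v : ℝ → E} {p : E}
    (hw : ∀ t, 0 ≤ t → HasDerivAt w (v t) t) (hv : ∀ t, 0 ≤ t → inner ℝ (v t) (w t - p) ≤ 0) :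
    AntitoneOn (fun t => ‖w t - p‖) (Ici 0) := by
  have hderiv : ∀ t, 0 ≤ t →
      HasDerivAt (fun s => ‖w s - p‖ ^ 2) (2 * inner ℝ (w t - p) (v t)) t :=
    fun t ht => ((hw t ht).sub_const p).norm_sq
  have hsq : AntitoneOn (fun t => ‖w t - p‖ ^ 2) (Ici 0) := by
    refine antitoneOn_of_hasDerivWithinAt_nonpos (convex_Ici 0)
      (fun t ht => (hderiv t ht).continuousAt.continuousWithinAt)
      (fun t ht => (hderiv t (interior_subset ht)).hasDerivWithinAt) fun t ht => ?_
    have := hv t (interior_subset ht)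
    rw [real_inner_comm] at this
    linarith
  intro s hs t ht hst
  exact (pow_le_pow_iff_left₀ (norm_nonneg _) (norm_nonneg _) two_ne_zero).1 (hsq hs ht hst)

lemma norm_sub_le_of_tendsto_of_inner_deriv_nonpos {w v : ℝ → E} {p winf : E}
    (hw : ∀ t, 0 ≤ t → HasDerivAt w (v t) t) (hv : ∀ t, 0 ≤ t → inner ℝ (v t) (w t - p) ≤ 0)
    (hlim : Tendsto w atTop (nhds winf)) :
    ‖winf - p‖ ≤ ‖w 0 - p‖ := by
  refine le_of_tendsto (hlim.sub_const p).norm ?_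
  filter_upwards [eventually_ge_atTop 0] with t ht
  exact antitoneOn_norm_sub_of_inner_deriv_nonpos hw hv self_mem_Ici ht ht

end Flow

lemma norm_sub_le_two_mul_of_norm_sub_le {E : Type*} [SeminormedAddCommGroup E] {a b p : E}
    (h : ‖a - p‖ ≤ ‖b - p‖) : ‖a - b‖ ≤ 2 * ‖p - b‖ := by
  have := norm_sub_le_norm_sub_add_norm_sub a p b
  rw [norm_sub_rev b p] at h
  linarith

lemma eq_of_sum_sq_sub_eq_zero {ι : Type*} [Fintype ι] {f g : ι → ℝ}
    (h : ∑ i, (f i - g i) ^ 2 = 0) (i : ι) : f i = g i := by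
  have hi := (Finset.sum_eq_zero_iff_of_nonneg fun j _ => sq_nonneg (f j - g j)).1 h i
    (Finset.mem_univ i)
  exact sub_eq_zero.1 (pow_eq_zero_iff two_ne_zero |>.1 hi)

section SingleNeuron

variable {E ι : Type*} [NormedAddCommGroup E] [InnerProductSpace ℝ E] [Fintype ι]

/-- The gradient of `u ↦ ½ ∑ᵢ (σ ⟪xᵢ, u⟫ - yᵢ)²`, with `σ'` standing for the derivative of `σ`. -/
def singleNeuronGrad (σ σ' : ℝ → ℝ) (x : ι → E) (y : ι → ℝ) (u : E) : E :=
  ∑ i, ((σ (inner ℝ (x i) u) - y i) * σ' (inner ℝ (x i) u)) • x i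

lemma inner_singleNeuronGrad_sub_nonneg {σ σ' : ℝ → ℝ} (hσ : Monotone σ)
    (hσ' : ∀ z, 0 ≤ σ' z) (x : ι → E) (y : ι → ℝ) (u : E) {p : E}
    (hp : ∀ i, σ (inner ℝ (x i) p) = y i) :
    0 ≤ inner ℝ (singleNeuronGrad σ σ' x y u) (u - p) := by
  rw [singleNeuronGrad, sum_inner]
  refine Finset.sum_nonneg fun i _ => ?_
  rw [real_inner_smul_left, inner_sub_right, ← hp i, mul_right_comm]
  exact mul_nonneg
    ((monovary_id_iff.2 hσ).sub_mul_sub_nonneg (inner ℝ (x i) p) (inner ℝ (x i) u))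
    (hσ' _)

end SingleNeuron

theorem stmt2_general {d n : ℕ} (σ σ' : ℝ → ℝ) (hσ : Monotone σ) (hσ' : ∀ z, 0 ≤ σ' z)
    (x : Fin n → EuclideanSpace ℝ (Fin d)) (y : Fin n → ℝ)
    (L : EuclideanSpace ℝ (Fin d) → ℝ)
    (hL : ∀ u, L u = (1 / 2) * ∑ i, (σ (inner ℝ (x i) u) - y i) ^ 2)
    (w : ℝ → EuclideanSpace ℝ (Fin d))
    (hflow : ∀ t : ℝ, 0 ≤ t →
      HasDerivAt w (-(∑ i, ((σ (inner ℝ (x i) (w t)) - y i) * σ' (inner ℝ (x i) (w t))) • x i)) t)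
    (winf : EuclideanSpace ℝ (Fin d)) (hlim : Tendsto w atTop (nhds winf))
    (wstar : EuclideanSpace ℝ (Fin d)) (hstar : L wstar = 0) :
    ‖winf - w 0‖ ≤ 2 * ‖wstar - w 0‖ := by
  have hfit : ∀ i, σ (inner ℝ (x i) wstar) = y i :=
    eq_of_sum_sq_sub_eq_zero (by simpa [hL] using hstar)
  have hdescent : ∀ t, 0 ≤ t →
      inner ℝ (-singleNeuronGrad σ σ' x y (w t)) (w t - wstar) ≤ 0 := fun t _ => by
    rw [inner_neg_left, neg_nonpos]
    exact inner_singleNeuronGrad_sub_nonneg hσ hσ' x y (w t) hfit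
  exact norm_sub_le_two_mul_of_norm_sub_le
    (norm_sub_le_of_tendsto_of_inner_deriv_nonpos hflow hdescent hlim)

/-- If gradient flow on the single-neuron square loss with a monotonically non-decreasing
activation converges to a zero-loss point `w(∞)`, and `w*` is a minimal-distance zero-loss
solution, then `‖w(∞) - w(0)‖ ≤ 2 ‖w* - w(0)‖`. -/
theorem stmt2 {d n : ℕ} (σ σ' : ℝ → ℝ) (hσ : Monotone σ) (hσ' : ∀ z, 0 ≤ σ' z)
    (x : Fin n → EuclideanSpace ℝ (Fin d)) (y : Fin n → ℝ)
    (L : EuclideanSpace ℝ (Fin d) → ℝ)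
    (hL : ∀ u, L u = (1 / 2) * ∑ i, (σ (inner ℝ (x i) u) - y i) ^ 2)
    (w : ℝ → EuclideanSpace ℝ (Fin d))
    (hflow : ∀ t : ℝ, 0 ≤ t →
      HasDerivAt w (-(∑ i, ((σ (inner ℝ (x i) (w t)) - y i) * σ' (inner ℝ (x i) (w t))) • x i)) t)
    (winf : EuclideanSpace ℝ (Fin d)) (hlim : Tendsto w atTop (nhds winf))
    (hinf : L winf = 0)
    (wstar : EuclideanSpace ℝ (Fin d)) (hstar : L wstar = 0)
    (hmin : ∀ u, L u = 0 → ‖wstar - w 0‖ ≤ ‖u - w 0‖) :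
    ‖winf - w 0‖ ≤ 2 * ‖wstar - w 0‖ :=
  stmt2_general σ σ' hσ hσ' x y L hL w hflow winf hlim wstar hstar
end

section
/- Balancedness invariance for a single-hidden-neuron ReLU network: let θ(t) = (w(t), v(t)) ∈ ℝ^d × ℝ follow gradient flow on L(w,v) = ½ Σᵢ (v·σ(⟨xᵢ,w⟩) - yᵢ)² where σ is the ReLU function. Then d/dt (‖w(t)‖² - v(t)²) = 0, i.e., ‖w(t)‖² - v(t)² is constant along the flow. -/
/-!
Since `σ' z * z = σ z`, pairing `w` with `ẇ` turns every `σ'(⟨xᵢ,w⟩) xᵢ` into `σ(⟨xᵢ,w⟩)`, so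
`⟨w, ẇ⟩ = v v̇` and the derivative `2⟨w, ẇ⟩ - 2 v v̇` of `‖w‖² - v²` vanishes.
-/

open scoped RealInnerProductSpace

theorem hasDerivAt_norm_sq_sub_sq_eq_zero {F : Type*} [NormedAddCommGroup F]
    [InnerProductSpace ℝ F] {w : ℝ → F} {v : ℝ → ℝ} {w' : F} {v' t : ℝ}
    (hw : HasDerivAt w w' t) (hv : HasDerivAt v v' t) (hbal : ⟪w t, w'⟫ = v t * v') :
    HasDerivAt (fun s => ‖w s‖ ^ 2 - v s ^ 2) 0 t :=
  (hw.norm_sq.sub (hv.pow 2)).congr_deriv (by rw [hbal]; ring)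

theorem inner_sum_mul_deriv_smul_eq {F ι : Type*} [NormedAddCommGroup F]
    [InnerProductSpace ℝ F] [Fintype ι] {σ σ' : ℝ → ℝ} (hσ' : ∀ z, σ' z * z = σ z)
    (x : ι → F) (a : ι → ℝ) (b : ℝ) (w : F) :
    ⟪w, ∑ i, (a i * (b * σ' ⟪x i, w⟫)) • x i⟫ = b * ∑ i, a i * σ ⟪x i, w⟫ := by
  rw [inner_sum, Finset.mul_sum]
  refine Finset.sum_congr rfl fun i _ => ?_
  rw [real_inner_smul_right, real_inner_comm, ← hσ']
  ring

theorem stmt5_general {d n : ℕ} (σ σ' : ℝ → ℝ)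
    (hσ' : ∀ z, σ' z * z = σ z)
    (x : Fin n → EuclideanSpace ℝ (Fin d)) (y : Fin n → ℝ)
    (w : ℝ → EuclideanSpace ℝ (Fin d)) (v : ℝ → ℝ)
    (hfloww : ∀ t : ℝ, HasDerivAt w
      (-(∑ i, ((v t * σ (inner ℝ (x i) (w t)) - y i) * (v t * σ' (inner ℝ (x i) (w t)))) • x i)) t)
    (hflowv : ∀ t : ℝ, HasDerivAt v
      (-(∑ i, (v t * σ (inner ℝ (x i) (w t)) - y i) * σ (inner ℝ (x i) (w t)))) t) :
    ∀ t : ℝ, HasDerivAt (fun s => ‖w s‖ ^ 2 - (v s) ^ 2) 0 t := by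
  intro t
  refine hasDerivAt_norm_sq_sub_sq_eq_zero (hfloww t) (hflowv t) ?_
  rw [inner_neg_right, inner_sum_mul_deriv_smul_eq hσ', mul_neg]

/-- Balancedness invariance for a single-hidden-neuron ReLU network: along gradient flow
on `L(w,v) = ½ Σᵢ (v σ(⟨xᵢ,w⟩) - yᵢ)²` with `σ` the ReLU, the quantity `‖w‖² - v²` has
zero derivative. -/
theorem stmt5 {d n : ℕ} (σ σ' : ℝ → ℝ) (hσ : ∀ z, σ z = max z 0)
    (hσ' : ∀ z, σ' z * z = σ z)
    (x : Fin n → EuclideanSpace ℝ (Fin d)) (y : Fin n → ℝ)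
    (w : ℝ → EuclideanSpace ℝ (Fin d)) (v : ℝ → ℝ)
    (hfloww : ∀ t : ℝ, HasDerivAt w
      (-(∑ i, ((v t * σ (inner ℝ (x i) (w t)) - y i) * (v t * σ' (inner ℝ (x i) (w t)))) • x i)) t)
    (hflowv : ∀ t : ℝ, HasDerivAt v
      (-(∑ i, (v t * σ (inner ℝ (x i) (w t)) - y i) * σ (inner ℝ (x i) (w t)))) t) :
    ∀ t : ℝ, HasDerivAt (fun s => ‖w s‖ ^ 2 - (v s) ^ 2) 0 t :=
  stmt5_general σ σ' hσ' x y w v hfloww hflowv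
end

section
/- Radiality lemma: let q, c > 0, d ≥ 3, and let R : ℝ^d → ℝ satisfy: for every α > 0, every w ∈ ℝ^d with ‖w‖ = αq, and every v ∈ ℝ^d with ‖v‖ = αc and ⟨w, v⟩ = 0, one has R(w) = R(w + v). Then R is radial on ℝ^d ∖ {0}: there is f : ℝ₊ → ℝ with R(w) = f(‖w‖) for every w ≠ 0. -/
/-!
For `‖w‖ = r`, the points `w + v` with `v ⊥ w` and `‖v‖ = ℓ` are exactly the `x` with
`⟪w, x⟫ = r²` and `‖x‖² = r² + ℓ²`. For two points `w, w'` of the sphere of radius `r` that are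
close enough, such an `x` common to both is `λ (w + w') + u` with `u ⊥ w, w'`, which exists in
dimension at least three; taking `ℓ = r c / q` the hypothesis gives `R w = R x = R w'`. So `R` is
locally constant on each sphere, and spheres are connected.
-/

open Module Filter Topology Metric
open scoped RealInnerProductSpace

theorem exists_eq_comp_norm_of_norm_eq {F β : Type*} [Norm F] [Zero F] {R : F → β}
    (h : ∀ w w' : F, w ≠ 0 → ‖w‖ = ‖w'‖ → R w = R w') :
    ∃ f : ℝ → β, ∀ w : F, w ≠ 0 → R w = f ‖w‖ :=
  ⟨fun r ↦ R (Classical.epsilon fun w : F ↦ ‖w‖ = r),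
    fun w hw ↦ h w _ hw (Classical.epsilon_spec (p := fun w' : F ↦ ‖w'‖ = ‖w‖) ⟨w, rfl⟩).symm⟩

variable {E : Type*} [NormedAddCommGroup E] [InnerProductSpace ℝ E]

theorem exists_norm_eq_inner_eq_zero_inner_eq_zero [FiniteDimensional ℝ E]
    (hE : 3 ≤ finrank ℝ E) (w w' : E) {s : ℝ} (hs : 0 ≤ s) :
    ∃ u : E, ‖u‖ = s ∧ ⟪w, u⟫ = 0 ∧ ⟪w', u⟫ = 0 := by
  classical
  set K := Submodule.span ℝ (({w, w'} : Finset E) : Set E)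
  have hK : finrank ℝ K ≤ 2 := (finrank_span_finset_le_card _).trans Finset.card_le_two
  have : Nontrivial Kᗮ := Module.nontrivial_of_finrank_pos (R := ℝ) <| by
    have := K.finrank_add_finrank_orthogonal
    omega
  obtain ⟨u, hu⟩ := exists_norm_eq Kᗮ hs
  refine ⟨u, hu, ?_, ?_⟩ <;>
    exact Submodule.inner_right_of_mem_orthogonal (Submodule.subset_span (by simp)) u.2

theorem two_mul_inner_add_eq_norm_add_sq {w w' : E} (h : ‖w‖ = ‖w'‖) :
    2 * ⟪w, w + w'⟫ = ‖w + w'‖ ^ 2 := by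
  rw [inner_add_right, real_inner_self_eq_norm_sq, norm_add_sq_real, h]
  ring

theorem exists_inner_eq_inner_eq_of_norm_add_sq [FiniteDimensional ℝ E]
    (hE : 3 ≤ finrank ℝ E) {r ℓ : ℝ} (hr : 0 < r) {w w' : E} (hw : ‖w‖ = r) (hw' : ‖w'‖ = r)
    (hclose : 4 * r ^ 4 ≤ ‖w + w'‖ ^ 2 * (r ^ 2 + ℓ ^ 2)) :
    ∃ x : E, ⟪w, x⟫ = r ^ 2 ∧ ⟪w', x⟫ = r ^ 2 ∧ ‖x‖ ^ 2 = r ^ 2 + ℓ ^ 2 := by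
  set s := w + w'
  have hs : ‖s‖ ≠ 0 := by
    rintro hs
    rw [hs] at hclose
    norm_num at hclose
    linarith [pow_pos hr 4]
  obtain ⟨u, hu, hwu, hw'u⟩ := exists_norm_eq_inner_eq_zero_inner_eq_zero hE w w'
    (Real.sqrt_nonneg (r ^ 2 + ℓ ^ 2 - 4 * r ^ 4 / ‖s‖ ^ 2))
  have hu2 : ‖u‖ ^ 2 = r ^ 2 + ℓ ^ 2 - 4 * r ^ 4 / ‖s‖ ^ 2 := by
    rw [hu, Real.sq_sqrt]
    rw [sub_nonneg, div_le_iff₀ (by positivity)]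
    linarith
  have hsu : ⟪s, u⟫ = 0 := by rw [inner_add_left, hwu, hw'u, add_zero]
  have hws : 2 * ⟪w, s⟫ = ‖s‖ ^ 2 := two_mul_inner_add_eq_norm_add_sq (hw.trans hw'.symm)
  have hw's : 2 * ⟪w', s⟫ = ‖s‖ ^ 2 := by
    simpa only [s, add_comm w'] using two_mul_inner_add_eq_norm_add_sq (hw'.trans hw.symm)
  -- `⟪w, s⟫ = ⟪w', s⟫ = ‖s‖² / 2`, so this multiple of `s` has inner product `r²` with both.
  refine ⟨(2 * r ^ 2 / ‖s‖ ^ 2) • s + u, ?_, ?_, ?_⟩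
  · rw [inner_add_right, real_inner_smul_right, hwu]
    field_simp
    linear_combination r ^ 2 * hws
  · rw [inner_add_right, real_inner_smul_right, hw'u]
    field_simp
    linear_combination r ^ 2 * hw's
  · rw [norm_add_sq_real, real_inner_smul_left, hsu, norm_smul, mul_pow, hu2,
      Real.norm_eq_abs, sq_abs]
    field_simp
    ring

theorem inner_sub_self_eq_zero {w x : E} (h : ⟪w, x⟫ = ‖w‖ ^ 2) : ⟪w, x - w⟫ = 0 := by
  rw [inner_sub_right, real_inner_self_eq_norm_sq, h, sub_self]

theorem norm_sub_self_eq {w x : E} {ℓ : ℝ} (hℓ : 0 ≤ ℓ) (h : ⟪w, x⟫ = ‖w‖ ^ 2)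
    (hx : ‖x‖ ^ 2 = ‖w‖ ^ 2 + ℓ ^ 2) : ‖x - w‖ = ℓ := by
  rw [← sq_eq_sq₀ (norm_nonneg _) hℓ, norm_sub_sq_real, real_inner_comm, h, hx]
  ring

def TangentShiftInvariant {β : Type*} (q c : ℝ) (R : E → β) : Prop :=
  ∀ α : ℝ, 0 < α → ∀ w : E, ‖w‖ = α * q → ∀ v : E, ‖v‖ = α * c → ⟪w, v⟫ = 0 → R w = R (w + v)

section TangentShiftInvariant

variable {β : Type*} {q c : ℝ} {R : E → β}

theorem TangentShiftInvariant.apply_eq_apply_of_inner_eq (hR : TangentShiftInvariant q c R)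
    (hq : 0 < q) (hc : 0 ≤ c) {r : ℝ} (hr : 0 < r) {w x : E}
    (hw : ‖w‖ = r) (hwx : ⟪w, x⟫ = r ^ 2) (hx : ‖x‖ ^ 2 = r ^ 2 + (r / q * c) ^ 2) :
    R w = R x := by
  have hα : 0 < r / q := div_pos hr hq
  subst hw
  simpa only [add_sub_cancel] using hR _ hα w (div_mul_cancel₀ _ hq.ne').symm (x - w)
    (norm_sub_self_eq (mul_nonneg hα.le hc) hwx hx) (inner_sub_self_eq_zero hwx)

theorem TangentShiftInvariant.apply_eq_apply_of_norm_add_sq [FiniteDimensional ℝ E]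
    (hR : TangentShiftInvariant q c R) (hE : 3 ≤ finrank ℝ E)
    (hq : 0 < q) (hc : 0 ≤ c) {r : ℝ} (hr : 0 < r) {w w' : E} (hw : ‖w‖ = r) (hw' : ‖w'‖ = r)
    (hclose : 4 * r ^ 4 ≤ ‖w + w'‖ ^ 2 * (r ^ 2 + (r / q * c) ^ 2)) :
    R w = R w' := by
  obtain ⟨x, hwx, hw'x, hx⟩ := exists_inner_eq_inner_eq_of_norm_add_sq hE hr hw hw' hclose
  exact (hR.apply_eq_apply_of_inner_eq hq hc hr hw hwx hx).trans
    (hR.apply_eq_apply_of_inner_eq hq hc hr hw' hw'x hx).symm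

theorem TangentShiftInvariant.eventually_apply_eq [FiniteDimensional ℝ E]
    (hR : TangentShiftInvariant q c R) (hE : 3 ≤ finrank ℝ E) (hq : 0 < q)
    (hc : 0 < c) {r : ℝ} (hr : 0 < r) {w : E} (hw : ‖w‖ = r) :
    ∀ᶠ y in 𝓝[sphere 0 r] w, R w = R y := by
  have hclose : ∀ᶠ y in 𝓝 w, 4 * r ^ 4 < ‖w + y‖ ^ 2 * (r ^ 2 + (r / q * c) ^ 2) := by
    refine continuousAt_const.eventually_lt (by fun_prop) ?_
    have : 0 < r / q * c := by positivity
    rw [← two_smul ℝ w, norm_smul, hw]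
    norm_num
    nlinarith [pow_pos hr 2, pow_pos this 2]
  filter_upwards [nhdsWithin_le_nhds hclose, self_mem_nhdsWithin] with y hy hyr
  exact hR.apply_eq_apply_of_norm_add_sq hE hq hc.le hr hw (mem_sphere_zero_iff_norm.1 hyr) hy.le

theorem TangentShiftInvariant.apply_eq_apply_of_norm_eq [FiniteDimensional ℝ E]
    (hR : TangentShiftInvariant q c R) (hE : 3 ≤ finrank ℝ E) (hq : 0 < q)
    (hc : 0 < c) {w w' : E} (hw : w ≠ 0) (h : ‖w‖ = ‖w'‖) : R w = R w' := by
  have hrank : 1 < Module.rank ℝ E := by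
    rw [← finrank_eq_rank]
    exact_mod_cast (by omega : 1 < finrank ℝ E)
  exact (isConnected_sphere hrank 0 (norm_nonneg w)).isPreconnected.induction₂
    (fun x y ↦ R x = R y)
    (fun x hx ↦
      hR.eventually_apply_eq hE hq hc (norm_pos_iff.2 hw) (mem_sphere_zero_iff_norm.1 hx))
    (fun _ _ _ _ _ _ ↦ Eq.trans) (fun _ _ _ _ ↦ Eq.symm)
    (mem_sphere_zero_iff_norm.2 rfl) (mem_sphere_zero_iff_norm.2 h.symm)

end TangentShiftInvariant

/-- Radiality lemma: if `R : ℝ^d → ℝ` (with `d ≥ 3`) satisfies `R(w) = R(w+v)` for every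
`α > 0`, `‖w‖ = αq`, `‖v‖ = αc`, `⟨w,v⟩ = 0`, then `R` is radial on `ℝ^d ∖ {0}`. -/
theorem stmt7 {d : ℕ} (hd : 3 ≤ d) (q c : ℝ) (hq : 0 < q) (hc : 0 < c)
    (R : EuclideanSpace ℝ (Fin d) → ℝ)
    (hR : ∀ α : ℝ, 0 < α → ∀ w : EuclideanSpace ℝ (Fin d), ‖w‖ = α * q →
      ∀ v : EuclideanSpace ℝ (Fin d), ‖v‖ = α * c → (inner ℝ w v : ℝ) = 0 →
        R w = R (w + v)) :
    ∃ f : ℝ → ℝ, ∀ w : EuclideanSpace ℝ (Fin d), w ≠ 0 → R w = f ‖w‖ := by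
  have hE : 3 ≤ finrank ℝ (EuclideanSpace ℝ (Fin d)) := by simpa using hd
  exact exists_eq_comp_norm_of_norm_eq fun w w' hw h ↦
    TangentShiftInvariant.apply_eq_apply_of_norm_eq hR hE hq hc hw h
end

section
/- Constancy lemma: let q, c > 0, d ≥ 3, and let R : ℝ^d → ℝ be a function such that for every α > 0, every vector w ∈ ℝ^d with ‖w‖ = αq, and every vector v ∈ ℝ^d with ‖v‖ = αc and ⟨w, v⟩ = 0, one has R(w) = R(w + v) = min_{β ≥ 0} R(w + βv). Then R(w) = R(w') for all w, w' ∈ ℝ^d ∖ {0}. -/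
/-!
Identify the plane spanned by `x` and some `e ⊥ x` with `‖e‖ = ‖x‖` with `ℂ`, sending `1` to `x`.
A vector orthogonal to `z` is then `z * (t * I)`, so the hypotheses say that `R` does not
decrease under multiplication by `1 + t * I` and is unchanged under multiplication by
`1 + (c / q) * I`. Every `ζ` with `‖ζ‖ ≥ 8` is a product of such factors: three rotations by
`arg ζ / 3`, each of modulus at most `2`, and a real factor `1 + s ^ 2 = (1 + s * I) * (1 - s * I)`.
Hence `R x ≤ R y` whenever `‖y‖ ≥ 8 * ‖x‖`, while powers of `1 + (c / q) * I` carry `x` to vectors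
of arbitrarily large norm with the same value of `R`. Comparing two nonzero vectors through such
far-out vectors in both directions gives equality.
-/

open Complex Module RealInnerProductSpace

lemma Real.half_le_cos_of_abs_le_pi_div_three {θ : ℝ} (hθ : |θ| ≤ Real.pi / 3) :
    1 / 2 ≤ Real.cos θ := by
  rw [← Real.cos_abs, ← Real.cos_pi_div_three]
  exact Real.cos_le_cos_of_nonneg_of_le_pi (abs_nonneg θ) (by linarith [Real.pi_pos]) hθ

section Multipliers

variable {M₀ α : Type*} [MonoidWithZero M₀] [NoZeroDivisors M₀]

def nondecreasingMultipliers [Nontrivial M₀] [Preorder α] (f : M₀ → α) : Submonoid M₀ where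
  carrier := {a | a ≠ 0 ∧ ∀ z, z ≠ 0 → f z ≤ f (z * a)}
  one_mem' := ⟨one_ne_zero, fun z _ => by rw [mul_one]⟩
  mul_mem' := fun {a b} ⟨ha0, ha⟩ ⟨hb0, hb⟩ =>
    ⟨mul_ne_zero ha0 hb0, fun z hz => by
      rw [← mul_assoc]; exact (ha z hz).trans (hb _ (mul_ne_zero hz ha0))⟩

lemma apply_eq_apply_mul_pow {f : M₀ → α} {a : M₀} (ha : a ≠ 0)
    (hf : ∀ z, z ≠ 0 → f z = f (z * a)) {z : M₀} (hz : z ≠ 0) (m : ℕ) :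
    f z = f (z * a ^ m) := by
  induction m with
  | zero => rw [pow_zero, mul_one]
  | succ m ih => rw [ih, hf _ (mul_ne_zero hz (pow_ne_zero m ha)), pow_succ, mul_assoc]

end Multipliers

namespace Complex

theorem exists_eq_one_add_mul_I_pow_three_mul_one_add_sq {ζ : ℂ} (hζ : 8 ≤ ‖ζ‖) :
    ∃ t s : ℝ, ζ = (1 + t * I) ^ 3 * (1 + s ^ 2) := by
  obtain ⟨θ, hθ⟩ : ∃ θ : ℝ, arg ζ = 3 * θ := ⟨arg ζ / 3, by ring⟩
  have hcos : 1 / 2 ≤ Real.cos θ := Real.half_le_cos_of_abs_le_pi_div_three <| by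
    rw [abs_le]; constructor <;> linarith [neg_pi_lt_arg ζ, arg_le_pi ζ]
  have hscale : 1 ≤ ‖ζ‖ * Real.cos θ ^ 3 := by
    nlinarith [pow_le_pow_left₀ (by norm_num) hcos 3]
  have hcos0 : (Real.cos θ : ℂ) ≠ 0 := ofReal_ne_zero.mpr (by linarith)
  have hexp : exp (arg ζ * I) = (Real.cos θ + Real.sin θ * I) ^ 3 := by
    rw [hθ, ofReal_cos, ofReal_sin, ← exp_mul_I, ← exp_nat_mul]; push_cast; ring_nf
  refine ⟨Real.tan θ, √(‖ζ‖ * Real.cos θ ^ 3 - 1), ?_⟩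
  rw [← ofReal_pow, Real.sq_sqrt (by linarith), Real.tan_eq_sin_div_cos]
  conv_lhs => rw [← norm_mul_exp_arg_mul_I ζ, hexp]
  simp only [ofReal_div, ofReal_sub, ofReal_mul, ofReal_pow, ofReal_one]
  field_simp
  ring

lemma one_add_mul_I_ne_zero (t : ℝ) : 1 + t * I ≠ 0 := by
  intro h; simpa using congrArg re h

theorem apply_le_apply_mul_of_eight_le_norm {α : Type*} [Preorder α] {f : ℂ → α}
    (hf : ∀ z, z ≠ 0 → ∀ t : ℝ, f z ≤ f (z * (1 + t * I))) {z ζ : ℂ} (hz : z ≠ 0)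
    (hζ : 8 ≤ ‖ζ‖) : f z ≤ f (z * ζ) := by
  have hmem (t : ℝ) : 1 + t * I ∈ nondecreasingMultipliers f :=
    ⟨one_add_mul_I_ne_zero t, fun z hz => hf z hz t⟩
  have hsq (s : ℝ) : (1 + s ^ 2 : ℂ) = (1 + s * I) * (1 + (-s : ℝ) * I) := by
    push_cast; ring_nf; rw [I_sq]; ring
  obtain ⟨t, s, rfl⟩ := exists_eq_one_add_mul_I_pow_three_mul_one_add_sq hζ
  rw [hsq]
  exact (mul_mem (pow_mem (hmem t) 3) (mul_mem (hmem s) (hmem (-s)))).2 z hz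

end Complex

section Plane

variable {E : Type*} [NormedAddCommGroup E] [InnerProductSpace ℝ E]

lemma exists_inner_eq_zero_norm_eq (hE : 2 ≤ finrank ℝ E) (x : E) :
    ∃ e : E, ⟪x, e⟫ = 0 ∧ ‖e‖ = ‖x‖ := by
  have hne : (ℝ ∙ x)ᗮ ≠ ⊥ := by
    rw [Ne, Submodule.orthogonal_eq_bot_iff]
    intro htop
    have := finrank_span_le_card (R := ℝ) ({x} : Set E)
    rw [htop, finrank_top] at this
    simp only [Set.toFinset_singleton, Finset.card_singleton] at this
    omega
  obtain ⟨n, hn, hn0⟩ := Submodule.exists_mem_ne_zero_of_ne_bot hne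
  refine ⟨(‖x‖ / ‖n‖) • n, ?_, ?_⟩
  · rw [real_inner_smul_right, Submodule.mem_orthogonal_singleton_iff_inner_right.mp hn,
      mul_zero]
  · rw [norm_smul, Real.norm_of_nonneg (by positivity),
      div_mul_cancel₀ _ (norm_ne_zero_iff.mpr hn0)]

def planeMap (x e : E) : ℂ →ₗ[ℝ] E := reLm.smulRight x + imLm.smulRight e

@[simp] lemma planeMap_apply (x e : E) (z : ℂ) : planeMap x e z = z.re • x + z.im • e := rfl

variable {x e : E}

lemma inner_planeMap (hxe : ⟪x, e⟫ = 0) (he : ‖e‖ = ‖x‖) (z w : ℂ) :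
    ⟪planeMap x e z, planeMap x e w⟫ = ‖x‖ ^ 2 * ⟪z, w⟫ := by
  have hex : ⟪e, x⟫ = 0 := by rw [real_inner_comm, hxe]
  simp only [planeMap_apply, inner_add_left, inner_add_right, real_inner_smul_left,
    real_inner_smul_right, real_inner_self_eq_norm_sq, hxe, hex, he, Complex.inner, mul_re,
    conj_re, conj_im, mul_zero, add_zero, zero_add]
  ring

lemma norm_planeMap (hxe : ⟪x, e⟫ = 0) (he : ‖e‖ = ‖x‖) (z : ℂ) :
    ‖planeMap x e z‖ = ‖x‖ * ‖z‖ := by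
  rw [norm_eq_sqrt_real_inner, inner_planeMap hxe he, real_inner_self_eq_norm_sq,
    Real.sqrt_mul (by positivity), Real.sqrt_sq (norm_nonneg _), Real.sqrt_sq (norm_nonneg _)]

lemma planeMap_ne_zero (hxe : ⟪x, e⟫ = 0) (he : ‖e‖ = ‖x‖) (hx : x ≠ 0) {z : ℂ} (hz : z ≠ 0) :
    planeMap x e z ≠ 0 := by
  rw [← norm_ne_zero_iff, norm_planeMap hxe he]
  exact mul_ne_zero (norm_ne_zero_iff.mpr hx) (norm_ne_zero_iff.mpr hz)

lemma inner_planeMap_mul_mul_I (hxe : ⟪x, e⟫ = 0) (he : ‖e‖ = ‖x‖) (z : ℂ) (t : ℝ) :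
    ⟪planeMap x e z, planeMap x e (z * (t * I))⟫ = 0 := by
  rw [inner_planeMap hxe he, Complex.inner]
  simp only [mul_re, mul_im, conj_re, conj_im, ofReal_re, ofReal_im, I_re, I_im]
  ring

lemma exists_planeMap_eq (hE : 2 ≤ finrank ℝ E) (hx : x ≠ 0) (y : E) :
    ∃ e : E, ⟪x, e⟫ = 0 ∧ ‖e‖ = ‖x‖ ∧ ∃ z : ℂ, planeMap x e z = y := by
  have hx' : ‖x‖ ≠ 0 := norm_ne_zero_iff.mpr hx
  set a := ⟪x, y⟫ / ‖x‖ ^ 2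
  set p := y - a • x
  have hxp : ⟪x, p⟫ = 0 := by
    simp only [p, a, inner_sub_right, real_inner_smul_right, real_inner_self_eq_norm_sq]
    field_simp
    ring
  by_cases hp : p = 0
  · obtain ⟨e, hxe, he⟩ := exists_inner_eq_zero_norm_eq hE x
    refine ⟨e, hxe, he, a, ?_⟩
    rw [planeMap_apply, ofReal_re, ofReal_im, zero_smul, add_zero, ← sub_eq_zero.mp hp]
  · have hp' : ‖p‖ ≠ 0 := norm_ne_zero_iff.mpr hp
    refine ⟨(‖x‖ / ‖p‖) • p, ?_, ?_, ⟨a, ‖p‖ / ‖x‖⟩, ?_⟩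
    · rw [real_inner_smul_right, hxp, mul_zero]
    · rw [norm_smul, Real.norm_of_nonneg (by positivity), div_mul_cancel₀ _ hp']
    · rw [planeMap_apply, smul_smul, div_mul_div_cancel₀ hx', div_self hp', one_smul]
      exact add_sub_cancel _ _

end Plane

section Constancy

variable {E : Type*} [NormedAddCommGroup E] [InnerProductSpace ℝ E] {R : E → ℝ}

theorem apply_le_apply_of_eight_mul_norm_le (hE : 2 ≤ finrank ℝ E)
    (hle : ∀ x v : E, x ≠ 0 → ⟪x, v⟫ = 0 → R x ≤ R (x + v)) {x y : E} (hx : x ≠ 0)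
    (hxy : 8 * ‖x‖ ≤ ‖y‖) : R x ≤ R y := by
  obtain ⟨e, hxe, he, z, rfl⟩ := exists_planeMap_eq hE hx y
  have hf (w : ℂ) (hw : w ≠ 0) (t : ℝ) :
      R (planeMap x e w) ≤ R (planeMap x e (w * (1 + t * I))) := by
    rw [mul_one_add, map_add]
    exact hle _ _ (planeMap_ne_zero hxe he hx hw) (inner_planeMap_mul_mul_I hxe he w t)
  have hz : 8 ≤ ‖z‖ := by
    rw [norm_planeMap hxe he] at hxy
    exact le_of_mul_le_mul_left (by linarith) (norm_pos_iff.mpr hx)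
  simpa using
    Complex.apply_le_apply_mul_of_eight_le_norm (f := R ∘ planeMap x e) hf one_ne_zero hz

theorem exists_norm_eq_apply_eq (hE : 2 ≤ finrank ℝ E) {κ : ℝ} (hκ : 0 ≤ κ)
    (heq : ∀ x v : E, x ≠ 0 → ⟪x, v⟫ = 0 → ‖v‖ = κ * ‖x‖ → R x = R (x + v)) {x : E}
    (hx : x ≠ 0) (m : ℕ) : ∃ y : E, ‖y‖ = ‖x‖ * ‖1 + κ * I‖ ^ m ∧ R x = R y := by
  obtain ⟨e, hxe, he⟩ := exists_inner_eq_zero_norm_eq hE x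
  have hf (w : ℂ) (hw : w ≠ 0) : R (planeMap x e w) = R (planeMap x e (w * (1 + κ * I))) := by
    rw [mul_one_add, map_add]
    refine heq _ _ (planeMap_ne_zero hxe he hx hw) (inner_planeMap_mul_mul_I hxe he w κ) ?_
    rw [norm_planeMap hxe he, norm_planeMap hxe he, norm_mul, norm_mul, norm_I, norm_real,
      Real.norm_of_nonneg hκ]
    ring
  refine ⟨planeMap x e ((1 + κ * I) ^ m), by rw [norm_planeMap hxe he, norm_pow], ?_⟩
  simpa using apply_eq_apply_mul_pow (f := R ∘ planeMap x e) (one_add_mul_I_ne_zero κ) hf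
    one_ne_zero m

theorem apply_eq_apply_of_ne_zero (hE : 2 ≤ finrank ℝ E) {κ : ℝ} (hκ : 0 < κ)
    (hle : ∀ x v : E, x ≠ 0 → ⟪x, v⟫ = 0 → R x ≤ R (x + v))
    (heq : ∀ x v : E, x ≠ 0 → ⟪x, v⟫ = 0 → ‖v‖ = κ * ‖x‖ → R x = R (x + v)) {x x' : E}
    (hx : x ≠ 0) (hx' : x' ≠ 0) : R x = R x' := by
  have hgrowth : 1 < ‖1 + κ * I‖ := by
    rw [← ofReal_one, norm_add_mul_I, Real.lt_sqrt zero_le_one]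
    nlinarith
  have key : ∀ x x' : E, x ≠ 0 → x' ≠ 0 → R x' ≤ R x := by
    intro x x' hx hx'
    have hxpos := norm_pos_iff.mpr hx
    obtain ⟨m, hm⟩ := pow_unbounded_of_one_lt (8 * ‖x'‖ / ‖x‖) hgrowth
    obtain ⟨y, hy, hRy⟩ := exists_norm_eq_apply_eq hE hκ.le heq hx m
    rw [hRy]
    refine apply_le_apply_of_eight_mul_norm_le hE hle hx' ?_
    rw [hy, ← div_le_iff₀' hxpos]
    exact hm.le
  exact le_antisymm (key x' x hx' hx) (key x x' hx hx')

end Constancy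

section RayCondition

variable {E : Type*} [NormedAddCommGroup E] [InnerProductSpace ℝ E] {R : E → ℝ} {q c : ℝ}

lemma apply_eq_apply_add_of_ray_condition (hq : 0 < q)
    (hR : ∀ α : ℝ, 0 < α → ∀ w : E, ‖w‖ = α * q → ∀ v : E, ‖v‖ = α * c →
      ⟪w, v⟫ = 0 → R w = R (w + v) ∧ ∀ β : ℝ, 0 ≤ β → R w ≤ R (w + β • v))
    {x v : E} (hx : x ≠ 0) (hxv : ⟪x, v⟫ = 0) (hv : ‖v‖ = c / q * ‖x‖) : R x = R (x + v) :=
  (hR (‖x‖ / q) (div_pos (norm_pos_iff.mpr hx) hq) x (div_mul_cancel₀ _ hq.ne').symm v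
    (by rw [hv]; ring) hxv).1

lemma apply_le_apply_add_of_ray_condition (hq : 0 < q) (hc : 0 < c)
    (hR : ∀ α : ℝ, 0 < α → ∀ w : E, ‖w‖ = α * q → ∀ v : E, ‖v‖ = α * c →
      ⟪w, v⟫ = 0 → R w = R (w + v) ∧ ∀ β : ℝ, 0 ≤ β → R w ≤ R (w + β • v))
    {x v : E} (hx : x ≠ 0) (hxv : ⟪x, v⟫ = 0) : R x ≤ R (x + v) := by
  rcases eq_or_ne v 0 with rfl | hv
  · rw [add_zero]
  set α := ‖x‖ / q
  have hα : 0 < α := div_pos (norm_pos_iff.mpr hx) hq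
  have hv' : 0 < ‖v‖ := norm_pos_iff.mpr hv
  have hαc : 0 < α * c := mul_pos hα hc
  have h := (hR α hα x (div_mul_cancel₀ _ hq.ne').symm ((α * c / ‖v‖) • v)
    (by rw [norm_smul, Real.norm_of_nonneg (by positivity), div_mul_cancel₀ _ hv'.ne'])
    (by rw [real_inner_smul_right, hxv, mul_zero])).2 (‖v‖ / (α * c)) (by positivity)
  rwa [smul_smul, div_mul_div_cancel₀ hαc.ne', div_self hv'.ne', one_smul] at h

end RayCondition

/-- Constancy lemma: if `R : ℝ^d → ℝ` (with `d ≥ 3`) satisfies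
`R(w) = R(w+v) = min_{β ≥ 0} R(w + βv)` for every `α > 0`, `‖w‖ = αq`, `‖v‖ = αc`,
`⟨w,v⟩ = 0`, then `R` is constant on `ℝ^d ∖ {0}`. -/
theorem stmt8 {d : ℕ} (hd : 3 ≤ d) (q c : ℝ) (hq : 0 < q) (hc : 0 < c)
    (R : EuclideanSpace ℝ (Fin d) → ℝ)
    (hR : ∀ α : ℝ, 0 < α → ∀ w : EuclideanSpace ℝ (Fin d), ‖w‖ = α * q →
      ∀ v : EuclideanSpace ℝ (Fin d), ‖v‖ = α * c → (inner ℝ w v : ℝ) = 0 →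
        R w = R (w + v) ∧ ∀ β : ℝ, 0 ≤ β → R w ≤ R (w + β • v)) :
    ∀ w w' : EuclideanSpace ℝ (Fin d), w ≠ 0 → w' ≠ 0 → R w = R w' := by
  intro w w' hw hw'
  have hE : 2 ≤ finrank ℝ (EuclideanSpace ℝ (Fin d)) := by
    rw [finrank_euclideanSpace_fin]; omega
  exact apply_eq_apply_of_ne_zero hE (div_pos hc hq)
    (fun _ _ hx hxv => apply_le_apply_add_of_ray_condition hq hc hR hx hxv)
    (fun _ _ hx hxv hv => apply_eq_apply_add_of_ray_condition hq hR hx hxv hv) hw hw'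
end

section
/- Piecewise trajectory for the concatenated linear flows: let X̃ ∈ ℝ^{2×2} have rows (3,-1), (4,2), let a ∈ (4,5), b ∈ (0,1), α > 0, and define w̃(t) = α(5,-1)ᵀ + exp(-(t-t₁)X̃ᵀX̃)(α(a,b)ᵀ - α(5,-1)ᵀ) for t ≥ t₁. Then for all t ≥ t₁: ⟨(3,-1), w̃(t)⟩ ≥ 0 and ⟨(4,2), w̃(t)⟩ ≥ 0, and lim_{t→∞} w̃(t) = α(5,-1)ᵀ. -/
open Matrix Filter

/-!
`XᵀX` is positive definite, so it is orthogonally diagonalizable with positive eigenvalues and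
`exp (-s XᵀX)` is an orthogonal conjugate of a diagonal matrix with entries in `(0, 1]`. Hence it
does not increase Euclidean lengths and tends to `0` as `s → ∞`. Writing
`w̃(t) = α (c + exp (-(t - t₁) XᵀX) d)` with `c = (5, -1)` and `d = (a - 5, b + 1)`, the trajectory
stays in the disc of radius `α |d| < α √5` around `α c`, and that disc lies in both half-planes:
the distances from `c` to the two boundary lines are `16 / √10` and `18 / √20`.
-/

section
variable {n : Type*} [Fintype n] [DecidableEq n] {A : Matrix n n ℝ}

theorem Matrix.IsHermitian.exp_neg_smul_eq (hA : A.IsHermitian) (s : ℝ) :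
    NormedSpace.exp (-(s • A)) = (hA.eigenvectorUnitary : Matrix n n ℝ) *
      diagonal (fun i => Real.exp (-(s * hA.eigenvalues i))) *
      star (hA.eigenvectorUnitary : Matrix n n ℝ) := by
  set U := hA.eigenvectorUnitary
  have hU : IsUnit (U : Matrix n n ℝ) := (Unitary.toUnits U).isUnit
  have hUinv : star (U : Matrix n n ℝ) = (U : Matrix n n ℝ)⁻¹ :=
    (inv_eq_left_inv (Unitary.coe_star_mul_self U)).symm
  have hdiag :
      -(s • A) = U * diagonal (fun i => -(s * hA.eigenvalues i)) * (U : Matrix n n ℝ)⁻¹ := by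
    conv_lhs => rw [hA.spectral_theorem, Unitary.conjStarAlgAut_apply, hUinv]
    rw [← Matrix.smul_mul, ← Matrix.mul_smul, ← Matrix.neg_mul, ← Matrix.mul_neg, ← diagonal_smul,
      ← diagonal_neg]
    rfl
  rw [hdiag, exp_conj _ _ hU, exp_diagonal, hUinv]
  congr
  funext i
  simp [Real.exp_eq_exp_ℝ]

theorem Matrix.PosSemidef.sq_dotProduct_exp_neg_smul_mulVec_le (hA : A.PosSemidef) {s : ℝ}
    (hs : 0 ≤ s) (v d : n → ℝ) :
    (v ⬝ᵥ NormedSpace.exp (-(s • A)) *ᵥ d) ^ 2 ≤ (v ⬝ᵥ v) * (d ⬝ᵥ d) := by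
  set U : Matrix n n ℝ := (hA.isHermitian.eigenvectorUnitary : Matrix n n ℝ)
  set e : n → ℝ := fun i => Real.exp (-(s * hA.isHermitian.eigenvalues i))
  have hUT : star U = Uᵀ := by simp [star_eq_conjTranspose]
  have hUU : U * star U = 1 := Unitary.coe_mul_star_self _
  have hnorm (z : n → ℝ) : (z ᵥ* U) ⬝ᵥ (z ᵥ* U) = z ⬝ᵥ z := by
    rw [← dotProduct_mulVec, ← mulVec_transpose, mulVec_mulVec, ← hUT, hUU, one_mulVec]
  have he (i : n) : e i ^ 2 ≤ 1 := by
    have : e i ≤ 1 := Real.exp_le_one_iff.2 <|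
      neg_nonpos.2 (mul_nonneg hs (hA.eigenvalues_nonneg i))
    nlinarith [(Real.exp_pos _ : 0 < e i)]
  have hexp : v ⬝ᵥ NormedSpace.exp (-(s • A)) *ᵥ d = ∑ i, (v ᵥ* U) i * (e i * (d ᵥ* U) i) := by
    rw [hA.isHermitian.exp_neg_smul_eq, ← mulVec_mulVec, ← mulVec_mulVec, dotProduct_mulVec,
      hUT, mulVec_transpose]
    simp only [dotProduct, mulVec_diagonal]
    rfl
  calc (v ⬝ᵥ NormedSpace.exp (-(s • A)) *ᵥ d) ^ 2
      ≤ (∑ i, (v ᵥ* U) i ^ 2) * ∑ i, (e i * (d ᵥ* U) i) ^ 2 :=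
        hexp ▸ Finset.sum_mul_sq_le_sq_mul_sq _ _ _
    _ ≤ (∑ i, (v ᵥ* U) i ^ 2) * ∑ i, (d ᵥ* U) i ^ 2 := by
        refine mul_le_mul_of_nonneg_left (Finset.sum_le_sum fun i _ => ?_) (by positivity)
        rw [mul_pow]
        exact mul_le_of_le_one_left (sq_nonneg _) (he i)
    _ = (v ⬝ᵥ v) * (d ⬝ᵥ d) := by
        rw [← hnorm v, ← hnorm d]
        simp only [dotProduct, sq]

theorem Matrix.PosSemidef.dotProduct_add_exp_neg_smul_mulVec_nonneg (hA : A.PosSemidef) {s : ℝ}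
    (hs : 0 ≤ s) {v c d : n → ℝ} (hc : 0 ≤ v ⬝ᵥ c) (hd : (v ⬝ᵥ v) * (d ⬝ᵥ d) ≤ (v ⬝ᵥ c) ^ 2) :
    0 ≤ v ⬝ᵥ (c + NormedSpace.exp (-(s • A)) *ᵥ d) := by
  rw [dotProduct_add]
  linarith [(abs_le_of_sq_le_sq' ((hA.sq_dotProduct_exp_neg_smul_mulVec_le hs v d).trans hd) hc).1]

theorem Matrix.PosDef.tendsto_exp_neg_smul_atTop (hA : A.PosDef) :
    Tendsto (fun s : ℝ => NormedSpace.exp (-(s • A))) atTop (nhds 0) := by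
  simp_rw [hA.isHermitian.exp_neg_smul_eq]
  have hdecay : Tendsto (fun s : ℝ => fun i => Real.exp (-(s * hA.isHermitian.eigenvalues i)))
      atTop (nhds 0) :=
    tendsto_pi_nhds.2 fun i => Real.tendsto_exp_neg_atTop_nhds_zero.comp
      (tendsto_id.atTop_mul_const (hA.eigenvalues_pos i))
  simpa using (tendsto_const_nhds.mul ((continuous_id.matrix_diagonal.tendsto 0).comp hdecay)).mul
    (tendsto_const_nhds (x := star (hA.isHermitian.eigenvectorUnitary : Matrix n n ℝ)))

end

/-- Second part of the piecewise trajectory: with `X̃` having rows `(3,-1)` and `(4,2)`,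
`a ∈ (4,5)`, `b ∈ (0,1)`, the curve
`w̃(t) = α(5,-1) + exp(-(t-t₁) X̃ᵀX̃)(α(a,b) - α(5,-1))` satisfies
`⟨(3,-1), w̃(t)⟩ ≥ 0` and `⟨(4,2), w̃(t)⟩ ≥ 0` for all `t ≥ t₁`, and converges to
`α(5,-1)` as `t → ∞`. -/
theorem stmt17 (α a b t₁ : ℝ) (hα : 0 < α) (ha : 4 < a) (ha' : a < 5)
    (hb : 0 < b) (hb' : b < 1)
    (X : Matrix (Fin 2) (Fin 2) ℝ) (hX : X = !![3, -1; 4, 2])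
    (w : ℝ → Fin 2 → ℝ)
    (hw : ∀ t : ℝ, w t = α • ![5, -1]
      + (NormedSpace.exp (-((t - t₁) • (Xᵀ * X)))) *ᵥ (α • ![a, b] - α • ![5, -1])) :
    (∀ t : ℝ, t₁ ≤ t → 0 ≤ ![3, -1] ⬝ᵥ w t ∧ 0 ≤ ![4, 2] ⬝ᵥ w t)
    ∧ Tendsto w atTop (nhds (α • ![5, -1])) := by
  have hPD : (Xᵀ * X).PosDef := by
    simpa using PosDef.conjTranspose_mul_self X
      (mulVec_injective_of_det_ne_zero (by simp [hX, det_fin_two]; norm_num))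
  set E : ℝ → Matrix (Fin 2) (Fin 2) ℝ := fun t => NormedSpace.exp (-((t - t₁) • (Xᵀ * X)))
  set c : Fin 2 → ℝ := ![5, -1]
  set d : Fin 2 → ℝ := ![a, b] - c
  refine ⟨fun t ht => ?_, ?_⟩
  · have hhalfplane (v : Fin 2 → ℝ) (hc : 0 ≤ v ⬝ᵥ c) (hd : (v ⬝ᵥ v) * (d ⬝ᵥ d) ≤ (v ⬝ᵥ c) ^ 2) :
        0 ≤ v ⬝ᵥ w t := by
      rw [hw, ← smul_sub, mulVec_smul, ← smul_add, dotProduct_smul]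
      exact smul_nonneg hα.le <| hPD.posSemidef.dotProduct_add_exp_neg_smul_mulVec_nonneg
        (sub_nonneg.2 ht) hc hd
    constructor <;> apply hhalfplane <;> norm_num [c, d, dotProduct, Fin.sum_univ_two] <;> nlinarith
  · have hE : Tendsto E atTop (nhds 0) :=
      hPD.tendsto_exp_neg_smul_atTop.comp (tendsto_atTop_add_const_right _ _ tendsto_id)
    have hlim : Tendsto (fun t => α • c + E t *ᵥ (α • ![a, b] - α • c)) atTop
        (nhds (α • c + 0 *ᵥ (α • ![a, b] - α • c))) :=
      tendsto_const_nhds.add (((continuous_id.matrix_mulVec continuous_const).tendsto 0).comp hE)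
    rwa [zero_mulVec, add_zero, ← funext hw] at hlim
end

section
/- Existence of a simultaneous orthogonal perturbation point: let d ≥ 3, q, c > 0, α > 0, and let w, w' ∈ ℝ^d with ‖w‖ = ‖w'‖ = αq =: r and ε := ‖w - w'‖ ≤ 2rc'/√(1+c'²) where c' = c/q. Set u = ((w+w')/2)(1 + ε²/(4r² - ε²)) and let e be orthogonal to both w and w' with ‖e‖² = r²(c'² - ε²/(4r² - ε²)) (well-defined and such e exists since d ≥ 3). Then u* = u + e satisfies ‖u* - w‖ = ‖u* - w'‖ = αc and ⟨w, u* - w⟩ = ⟨w', u* - w'⟩ = 0. -/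
/-!
Since `‖w‖ = ‖w'‖`, we have `⟪w, w + w'⟫ = ‖w + w'‖² / 2`, so scaling the midpoint of `w, w'` by
`k = 4r² / ‖w + w'‖² = 1 + ε² / (4r² - ε²)` lands on the hyperplanes tangent to the sphere of
radius `r` at `w` and at `w'`. Adding `e ⟂ w, w'` stays on both, and Pythagoras gives
`‖u* - w‖² = (k - 1) r² + ‖e‖² = r² c'²`. The bound on `ε` says `ε² (1 + c'²) ≤ 4 r² c'²`, which is
`‖e‖² ≥ 0`; such an `e` exists because `span {w, w'}ᗮ` is nonzero in dimension at least three.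
-/

open Module
open scoped InnerProductSpace

section

variable {E : Type*} [NormedAddCommGroup E] [InnerProductSpace ℝ E]

theorem finrank_span_pair_le (x y : E) : finrank ℝ (Submodule.span ℝ {x, y}) ≤ 2 := by
  classical
  have h := finrank_span_finset_le_card (R := ℝ) ({x, y} : Finset E)
  rw [Finset.coe_pair] at h
  exact h.trans Finset.card_le_two

theorem exists_orthogonal_pair_norm_eq [FiniteDimensional ℝ E] (hE : 2 < finrank ℝ E)
    (x y : E) {s : ℝ} (hs : 0 ≤ s) :
    ∃ e : E, ⟪x, e⟫_ℝ = 0 ∧ ⟪y, e⟫_ℝ = 0 ∧ ‖e‖ = s := by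
  let K := Submodule.span ℝ ({x, y} : Set E)
  have : Nontrivial Kᗮ := by
    have := K.finrank_add_finrank_orthogonal
    have : finrank ℝ K ≤ 2 := finrank_span_pair_le x y
    exact Module.nontrivial_of_finrank_pos (R := ℝ) (by omega)
  obtain ⟨⟨e, he⟩, hes⟩ := exists_norm_eq Kᗮ hs
  exact ⟨e, K.inner_right_of_mem_orthogonal (Submodule.subset_span (by simp)) he,
    K.inner_right_of_mem_orthogonal (Submodule.subset_span (by simp)) he, hes⟩

theorem real_inner_add_eq_half_norm_add_sq {w w' : E} (h : ‖w‖ = ‖w'‖) :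
    ⟪w, w + w'⟫_ℝ = ‖w + w'‖ ^ 2 / 2 := by
  rw [inner_add_right, real_inner_self_eq_norm_sq, norm_add_sq_real, ← h]
  ring

theorem norm_add_sq_eq_of_norm_eq {w w' : E} {r : ℝ} (hw : ‖w‖ = r) (hw' : ‖w'‖ = r) :
    ‖w + w'‖ ^ 2 = 4 * r ^ 2 - ‖w - w'‖ ^ 2 := by
  rw [norm_add_sq_real, norm_sub_sq_real, hw, hw']
  ring

theorem real_inner_smul_midpoint_add_sub_eq_zero {w w' e : E} {r k : ℝ} (hw : ‖w‖ = r)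
    (hw' : ‖w'‖ = r) (hk : k * ‖w + w'‖ ^ 2 = 4 * r ^ 2) (he : ⟪w, e⟫_ℝ = 0) :
    ⟪w, k • ((2 : ℝ)⁻¹ • (w + w')) + e - w⟫_ℝ = 0 := by
  rw [inner_sub_right, inner_add_right, inner_smul_right, inner_smul_right,
    real_inner_add_eq_half_norm_add_sq (hw.trans hw'.symm), he, real_inner_self_eq_norm_sq, hw]
  linear_combination hk / 4

theorem norm_smul_midpoint_add_sub_sq {w w' e : E} {r k : ℝ} (hw : ‖w‖ = r) (hw' : ‖w'‖ = r)
    (hk : k * ‖w + w'‖ ^ 2 = 4 * r ^ 2) (he : ⟪w, e⟫_ℝ = 0) (he' : ⟪w', e⟫_ℝ = 0) :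
    ‖k • ((2 : ℝ)⁻¹ • (w + w')) + e - w‖ ^ 2 = (k - 1) * r ^ 2 + ‖e‖ ^ 2 := by
  have hu : ‖k • ((2 : ℝ)⁻¹ • (w + w')) + e‖ ^ 2 = k * r ^ 2 + ‖e‖ ^ 2 := by
    rw [norm_add_sq_real, real_inner_smul_left, real_inner_smul_left, inner_add_left, he, he',
      norm_smul, norm_smul, mul_pow, mul_pow, Real.norm_eq_abs, Real.norm_eq_abs, sq_abs, sq_abs]
    linear_combination (k / 4) * hk
  have hw₂ := norm_add_sq_real (k • ((2 : ℝ)⁻¹ • (w + w')) + e - w) w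
  rw [sub_add_cancel, real_inner_comm, real_inner_smul_midpoint_add_sub_eq_zero hw hw' hk he,
    hw] at hw₂
  linear_combination hu - hw₂

end

theorem sq_lt_and_div_sub_sq_le_of_le_div_sqrt {r c ε : ℝ} (hr : 0 < r) (hε₀ : 0 ≤ ε)
    (hε : ε ≤ 2 * r * c / √(1 + c ^ 2)) :
    ε ^ 2 < 4 * r ^ 2 ∧ ε ^ 2 / (4 * r ^ 2 - ε ^ 2) ≤ c ^ 2 := by
  have hS : 0 < √(1 + c ^ 2) := by positivity
  have hsq : ε ^ 2 * (1 + c ^ 2) ≤ 4 * r ^ 2 * c ^ 2 := by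
    have := pow_le_pow_left₀ (by positivity) ((le_div_iff₀ hS).1 hε) 2
    rw [mul_pow, Real.sq_sqrt (by positivity)] at this
    linear_combination this
  have hlt : ε ^ 2 < 4 * r ^ 2 := by nlinarith [sq_nonneg c]
  exact ⟨hlt, (div_le_iff₀ (by linarith)).2 (by linarith)⟩

/-- Existence of a simultaneous orthogonal perturbation point: for `w, w'` of equal norm
`r = αq` with `ε = ‖w - w'‖` small enough, the point `u* = u + e`, where
`u = ((w+w')/2)(1 + ε²/(4r² - ε²))` and `e ⟂ w, w'` with
`‖e‖² = r²(c'² - ε²/(4r² - ε²))` (such `e` exists since `d ≥ 3`), satisfies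
`‖u* - w‖ = ‖u* - w'‖ = αc` and `⟨w, u* - w⟩ = ⟨w', u* - w'⟩ = 0`. -/
theorem stmt19 {d : ℕ} (hd : 3 ≤ d) (q c α : ℝ) (hq : 0 < q) (hc : 0 < c) (hα : 0 < α)
    (w w' : EuclideanSpace ℝ (Fin d))
    (hw : ‖w‖ = α * q) (hw' : ‖w'‖ = α * q)
    (hε : ‖w - w'‖ ≤ 2 * (α * q) * (c / q) / Real.sqrt (1 + (c / q) ^ 2)) :
    ∃ e : EuclideanSpace ℝ (Fin d),
      (inner ℝ w e : ℝ) = 0 ∧ (inner ℝ w' e : ℝ) = 0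
      ∧ ‖e‖ ^ 2 = (α * q) ^ 2 * ((c / q) ^ 2 - ‖w - w'‖ ^ 2 / (4 * (α * q) ^ 2 - ‖w - w'‖ ^ 2))
      ∧ (∀ e' : EuclideanSpace ℝ (Fin d),
          (inner ℝ w e' : ℝ) = 0 → (inner ℝ w' e' : ℝ) = 0 →
          ‖e'‖ ^ 2 = (α * q) ^ 2 * ((c / q) ^ 2 - ‖w - w'‖ ^ 2 / (4 * (α * q) ^ 2 - ‖w - w'‖ ^ 2)) →
          ∀ ustar : EuclideanSpace ℝ (Fin d),
            ustar = (1 + ‖w - w'‖ ^ 2 / (4 * (α * q) ^ 2 - ‖w - w'‖ ^ 2)) • ((2 : ℝ)⁻¹ • (w + w')) + e' →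
            ‖ustar - w‖ = α * c ∧ ‖ustar - w'‖ = α * c
            ∧ (inner ℝ w (ustar - w) : ℝ) = 0 ∧ (inner ℝ w' (ustar - w') : ℝ) = 0) := by
  obtain ⟨hlt, hle⟩ := sq_lt_and_div_sub_sq_le_of_le_div_sqrt (by positivity) (norm_nonneg _) hε
  have hD : 4 * (α * q) ^ 2 - ‖w - w'‖ ^ 2 ≠ 0 := by linarith
  set k := 1 + ‖w - w'‖ ^ 2 / (4 * (α * q) ^ 2 - ‖w - w'‖ ^ 2) with hk_def
  have hk : k * ‖w + w'‖ ^ 2 = 4 * (α * q) ^ 2 := by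
    rw [norm_add_sq_eq_of_norm_eq hw hw', hk_def, add_mul, div_mul_cancel₀ _ hD]
    ring
  have hE : 2 < finrank ℝ (EuclideanSpace ℝ (Fin d)) := by
    rw [finrank_euclideanSpace_fin]; omega
  obtain ⟨e, he, he', hen⟩ := exists_orthogonal_pair_norm_eq hE w w'
    (Real.sqrt_nonneg ((α * q) ^ 2 * ((c / q) ^ 2 - ‖w - w'‖ ^ 2 / (4 * (α * q) ^ 2 - ‖w - w'‖ ^ 2))))
  refine ⟨e, he, he', ?_, ?_⟩
  · rw [hen, Real.sq_sqrt (mul_nonneg (sq_nonneg _) (sub_nonneg.2 hle))]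
  rintro e' h₁ h₂ hen' u rfl
  have hdist : ∀ {a b : EuclideanSpace ℝ (Fin d)}, ‖a‖ = α * q → ‖b‖ = α * q →
      ⟪a, e'⟫_ℝ = 0 → ⟪b, e'⟫_ℝ = 0 → k * ‖a + b‖ ^ 2 = 4 * (α * q) ^ 2 →
      ‖k • ((2 : ℝ)⁻¹ • (a + b)) + e' - a‖ = α * c := by
    intro a b ha hb ha' hb' hab
    rw [← sq_eq_sq₀ (norm_nonneg _) (by positivity), norm_smul_midpoint_add_sub_sq ha hb hab ha' hb',
      hen', hk_def, add_sub_cancel_left]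
    field_simp
    ring
  have hk' : k * ‖w' + w‖ ^ 2 = 4 * (α * q) ^ 2 := by rwa [add_comm]
  refine ⟨hdist hw hw' h₁ h₂ hk, ?_, real_inner_smul_midpoint_add_sub_eq_zero hw hw' hk h₁, ?_⟩
  · rw [add_comm w w']
    exact hdist hw' hw h₂ h₁ hk'
  · rw [add_comm w w']
    exact real_inner_smul_midpoint_add_sub_eq_zero hw' hw hk' h₂
end
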